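/- A formal power series f ∈ ℝ[[x₁,x₂,ξ₁,ξ₂]] satisfies {f,q₁} = 0 and {f,q₂} = 0 if and only if there exists a formal series g ∈ ℝ[[t₁,t₂]] with f = g(q₁,q₂). -/

import Mathlib

noncomputable section

/-- Formal power series in the four variables `x₁, ξ₁, x₂, ξ₂`
(indexed `0, 1, 2, 3` respectively). -/
abbrev PS4 : Type := MvPowerSeries (Fin 4) ℝ

/-- Formal power series in two variables `t₁, t₂`. -/
abbrev PS2 : Type := MvPowerSeries (Fin 2) ℝ

/-- Total degree of a monomial. -/
def degOf {n : ℕ} (m : Fin n →₀ ℕ) : ℕ := m.sum fun _ k => k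

/-- Build a formal power series from its coefficient function. -/
def mk4 (F : (Fin 4 →₀ ℕ) → ℝ) : PS4 := F

/-- Coefficient of a formal power series at a monomial. -/
def coeff4 (m : Fin 4 →₀ ℕ) (f : PS4) : ℝ := MvPowerSeries.coeff m f

/-- Formal partial derivative with respect to the `i`-th variable. -/
def pdF (i : Fin 4) (f : PS4) : PS4 :=
  mk4 fun m => ((m i : ℝ) + 1) * coeff4 (m + Finsupp.single i 1) f

/-- Formal Poisson bracket
`{f,g} = ∂f/∂ξ₁·∂g/∂x₁ − ∂f/∂x₁·∂g/∂ξ₁ + ∂f/∂ξ₂·∂g/∂x₂ − ∂f/∂x₂·∂g/∂ξ₂`,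
with variables ordered `(x₁, ξ₁, x₂, ξ₂) = (0, 1, 2, 3)`. -/
def poisF (f g : PS4) : PS4 :=
  pdF 1 f * pdF 0 g - pdF 0 f * pdF 1 g + pdF 3 f * pdF 2 g - pdF 2 f * pdF 3 g

/-- The focus-focus quadratic form `q₁ = x₁ξ₁ + x₂ξ₂` as a formal series. -/
def q1F : PS4 :=
  MvPowerSeries.X 0 * MvPowerSeries.X 1 + MvPowerSeries.X 2 * MvPowerSeries.X 3

/-- The focus-focus quadratic form `q₂ = x₁ξ₂ − x₂ξ₁` as a formal series. -/
def q2F : PS4 :=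
  MvPowerSeries.X 0 * MvPowerSeries.X 3 - MvPowerSeries.X 2 * MvPowerSeries.X 1

/-- A formal series is `O(N)` if all its coefficients in total degree `< N` vanish. -/
def OrdGE (N : ℕ) (f : PS4) : Prop := ∀ m : Fin 4 →₀ ℕ, degOf m < N → coeff4 m f = 0

/-- `ad_A f = {A, f}`. -/
def adF (A f : PS4) : PS4 := poisF A f

/-- `exp(ad_A) f = Σ_k ad_Aᵏ(f)/k!`.  When `A ∈ O(3)`, the coefficient of any fixed
monomial `m` of `ad_Aᵏ f` vanishes for `k > deg m`, so the coefficientwise truncated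
sum below is the honest exponential. -/
def expAdF (A f : PS4) : PS4 :=
  mk4 fun m => ∑ k ∈ Finset.range (degOf m + 1),
    ((Nat.factorial k : ℝ))⁻¹ * coeff4 m ((adF A)^[k] f)

/-- Substitution `g(q₁,q₂)` of the quadratic forms `q₁,q₂` into a formal series `g` of
two variables: since `q₁ᵏq₂ˡ` is homogeneous of degree `2(k+l)`, the coefficient of a
monomial `m` only involves finitely many `(k,l)` and the truncated sum below is the
honest substitution. -/
def substQF (g : PS2) : PS4 :=
  mk4 fun m => ∑ kl ∈ Finset.range (degOf m + 1) ×ˢ Finset.range (degOf m + 1),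
    MvPowerSeries.coeff (Finsupp.single 0 kl.1 + Finsupp.single 1 kl.2) g *
      coeff4 m (q1F ^ kl.1 * q2F ^ kl.2)

/-!
The bracket `{·, q₁}` is diagonal on the monomials `x₁^a ξ₁^b x₂^c ξ₂^d`, with eigenvalue
`(b + d) - (a + c)`, so a series commuting with `q₁` lives on the weight-zero monomials. On the
slice `x₂ = 0` these are the monomials `x₁^(k+l) ξ₁^k ξ₂^l`, which is what `q₁ᵏq₂ˡ` reduces to
modulo `x₂`; so `f` and `g(q₁,q₂)` agree there once `g` is read off from that slice. Their
difference `h` commutes with `q₂`. In `{h, q₂}` only the term `x₁ ∂_{x₂} h` lowers the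
`x₂`-degree, so if `h` has no terms of `x₂`-degree `≤ c`, the part of `{h, q₂}` of `x₂`-degree `c`
is `-x₁ ∂_{x₂}` of the part of `h` of `x₂`-degree `c + 1`, which must therefore vanish. By
induction on the `x₂`-degree, `h = 0`.

Conversely `g(q₁,q₂) = ∑ g_{kl} q₁ᵏq₂ˡ` converges coefficientwise, because `q₁ᵏq₂ˡ` is homogeneous
of degree `2(k+l)`; `{·, q}` is a continuous derivation, and `q₁`, `q₂` commute with each other.
-/

open MvPowerSeries Finsupp
open scoped MvPowerSeries.WithPiTopology

lemma pdF_eq_pderiv (i : Fin 4) : pdF i = pderiv ℝ i := by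
  funext f
  ext m
  rw [coeff_pderiv, mul_comm]
  rfl

def poissonDerivation (w : PS4) : Derivation ℝ PS4 PS4 :=
  pderiv ℝ 0 w • pderiv ℝ 1 - pderiv ℝ 1 w • pderiv ℝ 0 +
    pderiv ℝ 2 w • pderiv ℝ 3 - pderiv ℝ 3 w • pderiv ℝ 2

lemma poissonDerivation_apply (f w : PS4) : poissonDerivation w f = poisF f w := by
  simp only [poissonDerivation, poisF, pdF_eq_pderiv, Derivation.coe_add, Derivation.coe_sub,
    Derivation.coe_smul, Pi.add_apply, Pi.sub_apply, Pi.smul_apply, smul_eq_mul]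
  ring

lemma poisF_pow_mul_pow_eq_zero {u v w : PS4} (hu : poisF u w = 0) (hv : poisF v w = 0)
    (k l : ℕ) : poisF (u ^ k * v ^ l) w = 0 := by
  simp only [← poissonDerivation_apply] at hu hv ⊢
  simp [Derivation.leibniz, Derivation.leibniz_pow, hu, hv]

lemma poisF_sub_left (u v w : PS4) : poisF (u - v) w = poisF u w - poisF v w := by
  simp only [← poissonDerivation_apply, map_sub]

lemma pdF_q1F : pdF 0 q1F = X 1 ∧ pdF 1 q1F = X 0 ∧ pdF 2 q1F = X 3 ∧ pdF 3 q1F = X 2 := by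
  simp [pdF_eq_pderiv, q1F, Derivation.leibniz]

lemma pdF_q2F : pdF 0 q2F = X 3 ∧ pdF 1 q2F = -X 2 ∧ pdF 2 q2F = -X 1 ∧ pdF 3 q2F = X 0 := by
  simp [pdF_eq_pderiv, q2F, Derivation.leibniz]

lemma poisF_q1F (f : PS4) :
    poisF f q1F = pdF 1 f * X 1 - pdF 0 f * X 0 + pdF 3 f * X 3 - pdF 2 f * X 2 := by
  obtain ⟨h0, h1, h2, h3⟩ := pdF_q1F
  rw [poisF, h0, h1, h2, h3]

lemma poisF_q2F (f : PS4) :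
    poisF f q2F = pdF 1 f * X 3 + pdF 0 f * X 2 - pdF 3 f * X 1 - pdF 2 f * X 0 := by
  obtain ⟨h0, h1, h2, h3⟩ := pdF_q2F
  rw [poisF, h0, h1, h2, h3]
  ring

lemma poisF_q1F_pow_mul_q2F_pow (k l : ℕ) :
    poisF (q1F ^ k * q2F ^ l) q1F = 0 ∧ poisF (q1F ^ k * q2F ^ l) q2F = 0 := by
  obtain ⟨a0, a1, a2, a3⟩ := pdF_q1F
  obtain ⟨b0, b1, b2, b3⟩ := pdF_q2F
  constructor <;> apply poisF_pow_mul_pow_eq_zero <;>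
    simp only [poisF_q1F, poisF_q2F, a0, a1, a2, a3, b0, b1, b2, b3] <;> ring

lemma coeff_add_single_pdF_mul_X (f : PS4) (i j : Fin 4) (n : Fin 4 →₀ ℕ) :
    coeff (n + single j 1) (pdF i f * X j) = (n i + 1) * coeff (n + single i 1) f := by
  rw [X, coeff_add_mul_monomial, mul_one]
  rfl

lemma coeff_mul_X_of_apply_eq_zero {σ R : Type*} [Semiring R] (p : MvPowerSeries σ R) {j : σ}
    {m : σ →₀ ℕ} (hm : m j = 0) : coeff m (p * X j) = 0 := by
  rw [X, coeff_mul_monomial, if_neg (by rw [single_le_iff]; omega)]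

lemma exists_eq_add_single_of_apply_ne_zero {σ : Type*} {m : σ →₀ ℕ} {j : σ} (hm : m j ≠ 0) :
    ∃ n, m = n + single j 1 := by
  obtain ⟨n, rfl⟩ := exists_add_of_le (single_le_iff.2 (Nat.one_le_iff_ne_zero.2 hm))
  exact ⟨n, add_comm _ _⟩

lemma coeff_pdF_mul_X_self (f : PS4) (j : Fin 4) (m : Fin 4 →₀ ℕ) :
    coeff m (pdF j f * X j) = m j * coeff m f := by
  by_cases hm : m j = 0
  · rw [coeff_mul_X_of_apply_eq_zero _ hm, hm, Nat.cast_zero, zero_mul]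
  · obtain ⟨n, rfl⟩ := exists_eq_add_single_of_apply_ne_zero hm
    rw [coeff_add_single_pdF_mul_X]
    simp

lemma coeff_pdF_mul_X_eq_zero (f : PS4) {i k : Fin 4} (hik : i ≠ k) (j : Fin 4)
    {m : Fin 4 →₀ ℕ} (hf : ∀ n : Fin 4 →₀ ℕ, n k ≤ m k → coeff n f = 0) :
    coeff m (pdF i f * X j) = 0 := by
  by_cases hm : m j = 0
  · exact coeff_mul_X_of_apply_eq_zero _ hm
  · obtain ⟨n, rfl⟩ := exists_eq_add_single_of_apply_ne_zero hm
    rw [coeff_add_single_pdF_mul_X, hf, mul_zero]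
    simp [single_apply, hik]

lemma coeff_poisF_q1F (f : PS4) (m : Fin 4 →₀ ℕ) :
    coeff m (poisF f q1F) = ((m 1 + m 3 : ℝ) - (m 0 + m 2)) * coeff m f := by
  simp only [poisF_q1F, map_add, map_sub, coeff_pdF_mul_X_self]
  ring

lemma coeff_eq_zero_of_poisF_q1F_eq_zero {f : PS4} (hf : poisF f q1F = 0) {m : Fin 4 →₀ ℕ}
    (hm : m 0 + m 2 ≠ m 1 + m 3) : coeff m f = 0 := by
  have := congrArg (coeff m) hf
  rw [coeff_poisF_q1F, map_zero (coeff m), mul_eq_zero, sub_eq_zero] at this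
  exact this.resolve_left (by exact_mod_cast hm.symm)

lemma eq_zero_of_poisF_q2F_eq_zero {h : PS4} (hq : poisF h q2F = 0)
    (hslice : ∀ m : Fin 4 →₀ ℕ, m 2 = 0 → coeff m h = 0) : h = 0 := by
  suffices H : ∀ c, ∀ m : Fin 4 →₀ ℕ, m 2 ≤ c → coeff m h = 0 from
    ext fun m => H (m 2) m le_rfl
  intro c
  induction c with
  | zero => exact fun m hm => hslice m (Nat.le_zero.1 hm)
  | succ c ih =>
    intro m hm
    rcases Nat.lt_or_eq_of_le hm with hlt | heq
    · exact ih m (Nat.lt_succ_iff.1 hlt)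
    obtain ⟨n, rfl⟩ := exists_eq_add_single_of_apply_ne_zero (m := m) (j := 2) (by omega)
    have hn : n 2 = c := by simpa using heq
    have hlow : ∀ n' : Fin 4 →₀ ℕ, n' 2 ≤ (n + single 0 1 : Fin 4 →₀ ℕ) 2 → coeff n' h = 0 :=
      fun n' h' => ih n' (by simpa [hn] using h')
    have := congrArg (coeff (n + single 0 1)) hq
    rw [poisF_q2F, map_sub, map_sub, map_add, coeff_add_single_pdF_mul_X,
      coeff_pdF_mul_X_eq_zero h (i := 1) (by decide) 3 hlow,
      coeff_pdF_mul_X_eq_zero h (i := 0) (by decide) 2 hlow,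
      coeff_pdF_mul_X_eq_zero h (i := 3) (by decide) 1 hlow, map_zero (coeff _)] at this
    have hpos : (n 2 : ℝ) + 1 ≠ 0 := by positivity
    simpa [hpos] using this

lemma coeff_q1F_pow_mul_q2F_pow_of_degree_ne {k l : ℕ} {m : Fin 4 →₀ ℕ}
    (hm : m.degree ≠ 2 * k + 2 * l) : coeff m (q1F ^ k * q2F ^ l) = 0 := by
  have hX := MvPolynomial.isHomogeneous_X ℝ (σ := Fin 4)
  have hQ1 := ((hX 0).mul (hX 1)).add ((hX 2).mul (hX 3))
  have hQ2 := ((hX 0).mul (hX 3)).sub ((hX 2).mul (hX 1))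
  have := ((hQ1.pow k).mul (hQ2.pow l)).coeff_eq_zero (by simpa [mul_comm] using hm)
  rw [← MvPolynomial.coeff_coe, ← MvPolynomial.coeToMvPowerSeries.ringHom_apply] at this
  simpa only [q1F, q2F, map_mul, map_pow, map_add, map_sub,
    MvPolynomial.coeToMvPowerSeries.ringHom_apply, MvPolynomial.coe_X] using this

lemma degOf_eq_degree (m : Fin 4 →₀ ℕ) : degOf m = m.degree := rfl

lemma hasSum_substQF (g : PS2) :
    HasSum (fun kl : ℕ × ℕ => coeff (single 0 kl.1 + single 1 kl.2) g • (q1F ^ kl.1 * q2F ^ kl.2))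
      (substQF g) := by
  rw [WithPiTopology.hasSum_iff_hasSum_coeff]
  intro m
  simp only [map_smul, smul_eq_mul]
  refine hasSum_sum_of_ne_finset_zero fun kl hkl => ?_
  rw [coeff_q1F_pow_mul_q2F_pow_of_degree_ne, mul_zero]
  simp only [Finset.mem_product, Finset.mem_range, degOf_eq_degree] at hkl
  omega

lemma continuous_pderiv {σ R : Type*} [CommSemiring R] [TopologicalSpace R]
    [IsTopologicalSemiring R] (i : σ) : Continuous (pderiv R i : MvPowerSeries σ R → _) :=
  continuous_pi fun n => by
    simp_rw [← coeff_apply, coeff_pderiv]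
    exact (WithPiTopology.continuous_coeff R _).mul continuous_const

lemma continuous_poissonDerivation (w : PS4) : Continuous (poissonDerivation w) := by
  simp only [poissonDerivation, Derivation.coe_add, Derivation.coe_sub, Derivation.coe_smul]
  have := continuous_pderiv (σ := Fin 4) (R := ℝ)
  fun_prop

lemma poisF_substQF (g : PS2) : poisF (substQF g) q1F = 0 ∧ poisF (substQF g) q2F = 0 := by
  have key : ∀ w : PS4, (∀ k l : ℕ, poisF (q1F ^ k * q2F ^ l) w = 0) → poisF (substQF g) w = 0 := by
    intro w hw
    have := (hasSum_substQF g).map (poissonDerivation w) (continuous_poissonDerivation w)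
    simp only [Function.comp_def, Derivation.map_smul] at this
    simp only [poissonDerivation_apply, hw, smul_zero] at this
    exact this.unique hasSum_zero
  exact ⟨key _ fun k l => (poisF_q1F_pow_mul_q2F_pow k l).1,
    key _ fun k l => (poisF_q1F_pow_mul_q2F_pow k l).2⟩

/-- The exponent of `x₁^(k+l) ξ₁^k ξ₂^l`, which is `q₁ᵏq₂ˡ` modulo `x₂`. -/
def sliceExp (k l : ℕ) : Fin 4 →₀ ℕ := single 0 (k + l) + single 1 k + single 3 l

lemma sliceExp_injective : Function.Injective (fun kl : ℕ × ℕ => sliceExp kl.1 kl.2) := by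
  rintro ⟨k, l⟩ ⟨k', l'⟩ h
  have h1 := congrArg (· 1) h
  have h3 := congrArg (· 3) h
  simp only [sliceExp, coe_add, Pi.add_apply, single_apply] at h1 h3
  simp_all

lemma eq_sliceExp {m : Fin 4 →₀ ℕ} (h2 : m 2 = 0) (hw : m 0 + m 2 = m 1 + m 3) :
    m = sliceExp (m 1) (m 3) := by
  ext i
  fin_cases i <;> simp [sliceExp] <;> omega

lemma coeff_q1F_pow_mul_q2F_pow_of_apply_two_eq_zero {m : Fin 4 →₀ ℕ} (hm : m 2 = 0) (k l : ℕ) :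
    coeff m (q1F ^ k * q2F ^ l) = if m = sliceExp k l then 1 else 0 := by
  set I : Ideal PS4 := Ideal.span {X 2}
  have h1 : Ideal.Quotient.mk I q1F = Ideal.Quotient.mk I (X 0 * X 1) :=
    Ideal.Quotient.eq.2 (Ideal.mem_span_singleton'.2 ⟨X 3, by rw [q1F]; ring⟩)
  have h2 : Ideal.Quotient.mk I q2F = Ideal.Quotient.mk I (X 0 * X 3) :=
    Ideal.Quotient.eq.2 (Ideal.mem_span_singleton'.2 ⟨-X 1, by rw [q2F]; ring⟩)
  have hmod : q1F ^ k * q2F ^ l - (X 0 * X 1) ^ k * (X 0 * X 3) ^ l ∈ I := by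
    rw [← Ideal.Quotient.eq, map_mul, map_pow, map_pow, h1, h2, ← map_pow, ← map_pow, ← map_mul]
  obtain ⟨r, hr⟩ := Ideal.mem_span_singleton'.1 hmod
  have hmono : (X 0 * X 1) ^ k * (X 0 * X 3) ^ l = (monomial (sliceExp k l) 1 : PS4) := by
    rw [mul_pow, mul_pow, mul_mul_mul_comm, ← pow_add]
    simp only [X_pow_eq, monomial_mul_monomial, mul_one, sliceExp, add_assoc]
  rw [← sub_add_cancel (q1F ^ k * q2F ^ l) ((X 0 * X 1) ^ k * (X 0 * X 3) ^ l), ← hr, hmono,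
    map_add, coeff_mul_X_of_apply_eq_zero _ hm, zero_add, coeff_monomial]

lemma coeff_sliceExp_substQF (g : PS2) (k l : ℕ) :
    coeff (sliceExp k l) (substQF g) = coeff (single 0 k + single 1 l) g := by
  have hterm (kl : ℕ × ℕ) :
      coeff (sliceExp k l) (coeff (single 0 kl.1 + single 1 kl.2) g • (q1F ^ kl.1 * q2F ^ kl.2))
        = if kl = (k, l) then coeff (single 0 k + single 1 l) g else 0 := by
    have h2 : sliceExp k l 2 = 0 := by simp [sliceExp]
    rw [map_smul, smul_eq_mul, coeff_q1F_pow_mul_q2F_pow_of_apply_two_eq_zero h2]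
    by_cases h : kl = (k, l)
    · simp [h]
    · rw [if_neg fun e => h (sliceExp_injective e.symm), if_neg h, mul_zero]
  have hs := WithPiTopology.hasSum_iff_hasSum_coeff.1 (hasSum_substQF g) (sliceExp k l)
  simp only [hterm] at hs
  exact hs.unique (hasSum_ite_eq (k, l) _)

lemma eq_zero_of_poisF_eq_zero {h : PS4} (h1 : poisF h q1F = 0) (h2 : poisF h q2F = 0)
    (hslice : ∀ k l : ℕ, coeff (sliceExp k l) h = 0) : h = 0 := by
  refine eq_zero_of_poisF_q2F_eq_zero h2 fun m hm => ?_
  by_cases hw : m 0 + m 2 = m 1 + m 3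
  · rw [eq_sliceExp hm hw]
    exact hslice _ _
  · exact coeff_eq_zero_of_poisF_q1F_eq_zero h1 hw

/-- **Characterization of the formal commutant of `(q₁, q₂)`.**
A formal power series `f` Poisson-commutes with both `q₁` and `q₂` if and only if
`f = g(q₁,q₂)` for some formal power series `g` in two variables. -/
theorem formal_commutant_iff_function_of_q (f : PS4) :
    (poisF f q1F = 0 ∧ poisF f q2F = 0) ↔ ∃ g : PS2, f = substQF g := by
  refine ⟨fun ⟨h1, h2⟩ => ?_, fun ⟨g, hg⟩ => hg ▸ poisF_substQF g⟩
  let g : PS2 := fun s => coeff (sliceExp (s 0) (s 1)) f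
  obtain ⟨hg1, hg2⟩ := poisF_substQF g
  refine ⟨g, sub_eq_zero.1 (eq_zero_of_poisF_eq_zero ?_ ?_ fun k l => ?_)⟩
  · rw [poisF_sub_left, h1, hg1, sub_zero]
  · rw [poisF_sub_left, h2, hg2, sub_zero]
  · rw [map_sub, coeff_sliceExp_substQF, sub_eq_zero]
    show _ = coeff (sliceExp ((single 0 k + single 1 l : Fin 2 →₀ ℕ) 0)
      ((single 0 k + single 1 l : Fin 2 →₀ ℕ) 1)) f
    simp
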